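/- arXiv:1901.01335 — 2 statements merged into one kernel-verified Lean document; each statement's English description precedes it below -/
import Mathlib

section
/- There exists a constant c > 0 (depending only on Q, N) such that for all functions φ₁, φ₂ with φ₁ + 1, φ₂ + 1 ∈ C_0^∞(Q) one has |𝓑(φ₁) − 𝓑(φ₂)| ≤ c (1 + ‖φ₁‖_{H¹}³ + ‖φ₂‖_{H¹}³) ‖φ₁ − φ₂‖_{H¹}. -/
open MeasureTheory Filter Topology

noncomputable section

/-- Euclidean space `ℝ^N`. -/
abbrev Euc (N : ℕ) := EuclideanSpace ℝ (Fin N)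

/-- The Laplacian of a scalar function, as the sum of second partial derivatives. -/
def lap {N : ℕ} (φ : Euc N → ℝ) (x : Euc N) : ℝ :=
  ∑ i : Fin N, iteratedFDeriv ℝ 2 φ x ![EuclideanSpace.single i 1, EuclideanSpace.single i 1]

/-- The bilaplacian `Δ²`. -/
def biLap {N : ℕ} (φ : Euc N → ℝ) : Euc N → ℝ := lap (lap φ)

/-- The `L^p(Q)` norm. -/
def lpQ {N : ℕ} (Q : Set (Euc N)) (p : ℝ) {F : Type*} [NormedAddCommGroup F]
    (v : Euc N → F) : ℝ :=
  (∫ x in Q, ‖v x‖ ^ p) ^ (1 / p)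

/-- The `L^∞(Q)` (sup) norm. -/
def linfQ {N : ℕ} (Q : Set (Euc N)) {F : Type*} [NormedAddCommGroup F]
    (v : Euc N → F) : ℝ :=
  ⨆ x : Q, ‖v (x : Euc N)‖

/-- The Sobolev `H¹(Q)` norm. -/
def h1Q {N : ℕ} (Q : Set (Euc N)) {F : Type*} [NormedAddCommGroup F] [NormedSpace ℝ F]
    (v : Euc N → F) : ℝ :=
  Real.sqrt ((∫ x in Q, ‖v x‖ ^ 2) + ∫ x in Q, ‖iteratedFDeriv ℝ 1 v x‖ ^ 2)

/-- The Sobolev `H²(Q)` norm. -/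
def h2Q {N : ℕ} (Q : Set (Euc N)) {F : Type*} [NormedAddCommGroup F] [NormedSpace ℝ F]
    (v : Euc N → F) : ℝ :=
  Real.sqrt ((∫ x in Q, ‖v x‖ ^ 2) + (∫ x in Q, ‖iteratedFDeriv ℝ 1 v x‖ ^ 2)
    + ∫ x in Q, ‖iteratedFDeriv ℝ 2 v x‖ ^ 2)

/-- `φ ∈ C_0^∞(Q)`: smooth with compact support contained in `Q`. -/
def IsTest {N : ℕ} (Q : Set (Euc N)) {F : Type*} [NormedAddCommGroup F] [NormedSpace ℝ F]
    (φ : Euc N → F) : Prop :=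
  ContDiff ℝ (⊤ : ℕ∞) φ ∧ HasCompactSupport φ ∧ tsupport φ ⊆ Q

/-- `f(φ) = −Δφ + φ(φ² − 1)`. -/
def fCH {N : ℕ} (φ : Euc N → ℝ) (x : Euc N) : ℝ := -lap φ x + φ x * ((φ x) ^ 2 - 1)

/-- `𝓐(φ) = ∫_Q φ`. -/
def funcA {N : ℕ} (Q : Set (Euc N)) (φ : Euc N → ℝ) : ℝ := ∫ x in Q, φ x

/-- `𝓑(φ) = ∫_Q ( (1/2)|∇φ|² + (1/4)(φ² − 1)² )`. -/
def funcB {N : ℕ} (Q : Set (Euc N)) (φ : Euc N → ℝ) : ℝ :=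
  ∫ x in Q, ((1 / 2) * ‖gradient φ x‖ ^ 2 + (1 / 4) * ((φ x) ^ 2 - 1) ^ 2)

/-- The total energy `E(φ)`. -/
def energyE {N : ℕ} (Q : Set (Euc N)) (M₁ M₂ a b : ℝ) (φ : Euc N → ℝ) : ℝ :=
  (1 / 2) * (∫ x in Q, (fCH φ x) ^ 2) + (1 / 2) * M₁ * (funcA Q φ - a) ^ 2
    + (1 / 2) * M₂ * (funcB Q φ - b) ^ 2

/-- The variational derivative `δE(φ)`. -/
def deltaE {N : ℕ} (Q : Set (Euc N)) (M₁ M₂ a b : ℝ) (φ : Euc N → ℝ) (x : Euc N) : ℝ :=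
  biLap φ x - lap (fun y => (φ y) ^ 3 - φ y) x + (3 * (φ x) ^ 2 - 1) * fCH φ x
    + M₁ * (funcA Q φ - a) + M₂ * (funcB Q φ - b) * fCH φ x

/-- Membership in `H²(Q)` (classical formulation). -/
def MemH2 {N : ℕ} (Q : Set (Euc N)) (u : Euc N → ℝ) : Prop :=
  ContDiff ℝ 2 u ∧ IntegrableOn (fun x => (u x) ^ 2) Q ∧
    IntegrableOn (fun x => ‖gradient u x‖ ^ 2) Q ∧
    IntegrableOn (fun x => ‖iteratedFDeriv ℝ 2 u x‖ ^ 2) Q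

/-- Membership in `H¹₀(Q)`: `u` is an `H¹`-limit of test functions. -/
def MemH10 {N : ℕ} (Q : Set (Euc N)) (u : Euc N → ℝ) : Prop :=
  ∃ φ : ℕ → Euc N → ℝ, (∀ n, IsTest Q (φ n)) ∧
    Tendsto (fun n => h1Q Q (fun x => u x - φ n x)) atTop (𝓝 0)


----------------------------------------------------------------
-- auxiliary lemmas
----------------------------------------------------------------

section Aux

open ENNReal NNReal Module

lemma norm_grad_eq {N : ℕ} (f : Euc N → ℝ) (x : Euc N) :
    ‖gradient f x‖ = ‖fderiv ℝ f x‖ := (InnerProductSpace.toDual ℝ _).symm.norm_map _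

lemma norm_iter1_eq {N : ℕ} (f : Euc N → ℝ) (x : Euc N) :
    ‖iteratedFDeriv ℝ 1 f x‖ = ‖fderiv ℝ f x‖ := by
  rw [← norm_iteratedFDeriv_fderiv (n := 0), norm_iteratedFDeriv_zero]

variable {N : ℕ} {Q : Set (Euc N)}

lemma intQ (hQb : Bornology.IsBounded Q) {F : Type*} [NormedAddCommGroup F]
    {f : Euc N → F} (hf : Continuous f) : IntegrableOn f Q := by
  have := hQb.isCompact_closure
  exact (hf.continuousOn.integrableOn_compact this).mono_set subset_closure

lemma memLpQ (hQo : IsOpen Q) (hQb : Bornology.IsBounded Q)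
    {F : Type*} [NormedAddCommGroup F] {f : Euc N → F} (hf : Continuous f) (p : ℝ≥0∞) :
    MemLp f p (volume.restrict Q) := by
  have hfin : IsFiniteMeasure (volume.restrict Q) :=
    ⟨by rw [Measure.restrict_apply_univ]; exact hQb.measure_lt_top⟩
  obtain ⟨C, hC⟩ := hQb.isCompact_closure.exists_bound_of_continuousOn hf.continuousOn
  refine MemLp.of_bound hf.aestronglyMeasurable C ?_
  filter_upwards [ae_restrict_mem hQo.measurableSet] with x hx
  exact hC x (subset_closure hx)

lemma ofReal_integral_pow (hQb : Bornology.IsBounded Q) {F : Type*} [NormedAddCommGroup F]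
    {f : Euc N → F} (hf : Continuous f) (p : ℝ≥0∞) (q : ℕ) (hq : 0 < q) (hpq : p = q) :
    ENNReal.ofReal (∫ x in Q, ‖f x‖ ^ q) = eLpNorm f p (volume.restrict Q) ^ q := by
  subst hpq
  set μ := volume.restrict Q
  have hint : Integrable (fun x => ‖f x‖ ^ q) μ := intQ hQb (hf.norm.pow q)
  rw [MeasureTheory.ofReal_integral_eq_lintegral_ofReal hint
    (Eventually.of_forall fun x => by positivity)]
  rw [eLpNorm_eq_lintegral_rpow_enorm_toReal (by exact_mod_cast hq.ne') (by simp)]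
  rw [← ENNReal.rpow_natCast _ q, ← ENNReal.rpow_mul]
  have hq' : (q:ℝ) ≠ 0 := by exact_mod_cast hq.ne'
  rw [ENNReal.toReal_natCast, one_div, inv_mul_cancel₀ hq', ENNReal.rpow_one]
  refine lintegral_congr fun x => ?_
  rw [ENNReal.ofReal_pow (norm_nonneg _), ofReal_norm]
  simp [ENNReal.rpow_natCast]

lemma ennreal_le_of_sq_le_sq {x y : ℝ≥0∞} (h : x ^ 2 ≤ y ^ 2) : x ≤ y := by
  calc x = (x ^ (2:ℕ)) ^ ((2:ℝ)⁻¹) := by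
        rw [← ENNReal.rpow_natCast, ← ENNReal.rpow_mul]; norm_num
    _ ≤ (y ^ (2:ℕ)) ^ ((2:ℝ)⁻¹) := ENNReal.rpow_le_rpow (by exact_mod_cast h) (by norm_num)
    _ = y := by rw [← ENNReal.rpow_natCast, ← ENNReal.rpow_mul]; norm_num

lemma sqrt_add_le' (x y : ℝ) (hx : 0 ≤ x) (hy : 0 ≤ y) :
    Real.sqrt (x + y) ≤ Real.sqrt x + Real.sqrt y := by
  rw [show x + y = Real.sqrt x ^ 2 + Real.sqrt y ^ 2 by rw [Real.sq_sqrt hx, Real.sq_sqrt hy]]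
  have h := Real.sqrt_le_sqrt (show Real.sqrt x ^ 2 + Real.sqrt y ^ 2
      ≤ (Real.sqrt x + Real.sqrt y) ^ 2 by nlinarith [Real.sqrt_nonneg x, Real.sqrt_nonneg y])
  rwa [Real.sqrt_sq (by positivity)] at h

lemma cube_bound (a : ℝ) (ha : 0 ≤ a) : (1 + a) ^ 3 ≤ 7 * (1 + a ^ 3) := by
  nlinarith [mul_nonneg ha (sq_nonneg (a - 1)), sq_nonneg (a - 1), sq_nonneg a]

lemma lin_bound (a : ℝ) (ha : 0 ≤ a) : a ≤ 1 + a ^ 3 := by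
  nlinarith [mul_nonneg ha (sq_nonneg (a - 1)), sq_nonneg (a - 1), sq_nonneg a]

lemma sixbound (s t : ℝ) : ((s + t) * (s ^ 2 + t ^ 2 + 2)) ^ 2 ≤ 100 * (1 + s ^ 6 + t ^ 6) := by
  have h1 : (s + t) ^ 2 ≤ 2 * (s ^ 2 + t ^ 2) := by nlinarith [sq_nonneg (s - t)]
  have h2 : (s ^ 2 + t ^ 2 + 2) ^ 2 ≤ 2 * (s ^ 2 + t ^ 2) ^ 2 + 8 := by
    nlinarith [sq_nonneg (s ^ 2 + t ^ 2 - 2)]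
  have h3 : (s ^ 2 + t ^ 2) ^ 3 ≤ 4 * (s ^ 6 + t ^ 6) := by
    nlinarith [sq_nonneg (s ^ 2 - t ^ 2), sq_nonneg s, sq_nonneg t,
      mul_nonneg (sq_nonneg s) (sq_nonneg t)]
  have h4 : s ^ 2 + t ^ 2 ≤ 1 + (s ^ 2 + t ^ 2) ^ 3 := lin_bound _ (by positivity)
  nlinarith [mul_nonneg (sq_nonneg (s + t)) (sq_nonneg (s ^ 2 + t ^ 2 + 2)), sq_nonneg (s + t),
    sq_nonneg (s ^ 2 + t ^ 2 + 2), mul_le_mul h1 h2 (sq_nonneg _) (by positivity), h3, h4,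
    sq_nonneg (s ^ 2 + t ^ 2)]

lemma quart_ptwise (x y : ℝ) :
    |(x ^ 2 - 1) ^ 2 - (y ^ 2 - 1) ^ 2| ≤ |x - y| * ((|x| + |y|) * (x ^ 2 + y ^ 2 + 2)) := by
  have h : (x ^ 2 - 1) ^ 2 - (y ^ 2 - 1) ^ 2 = (x - y) * ((x + y) * (x ^ 2 + y ^ 2 - 2)) := by
    ring
  rw [h, abs_mul, abs_mul]
  refine mul_le_mul_of_nonneg_left (mul_le_mul (abs_add_le x y) ?_ (abs_nonneg _) ?_) (abs_nonneg _)
  · rw [abs_le]; constructor <;> nlinarith [sq_nonneg x, sq_nonneg y]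
  · positivity

lemma normsq_diff {E : Type*} [NormedAddCommGroup E] (u v : E) :
    |‖u‖ ^ 2 - ‖v‖ ^ 2| ≤ (‖u‖ + ‖v‖) * ‖u - v‖ := by
  have h : ‖u‖ ^ 2 - ‖v‖ ^ 2 = (‖u‖ + ‖v‖) * (‖u‖ - ‖v‖) := by ring
  rw [h, abs_mul, abs_of_nonneg (by positivity)]
  exact mul_le_mul_of_nonneg_left (abs_norm_sub_norm_le u v) (by positivity)

/-- Cauchy–Schwarz for set integrals of continuous nonnegative functions. -/
lemma myCS (hQo : IsOpen Q) (hQb : Bornology.IsBounded Q) {f g : Euc N → ℝ}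
    (hf : Continuous f) (hg : Continuous g) (hf0 : ∀ x, 0 ≤ f x) (hg0 : ∀ x, 0 ≤ g x) :
    ∫ x in Q, f x * g x ≤
      Real.sqrt (∫ x in Q, f x ^ 2) * Real.sqrt (∫ x in Q, g x ^ 2) := by
  have hpq : Real.HolderConjugate 2 2 := Real.HolderConjugate.two_two
  have h := integral_mul_le_Lp_mul_Lq_of_nonneg (μ := volume.restrict Q) hpq
    (Eventually.of_forall hf0) (Eventually.of_forall hg0)
    (memLpQ hQo hQb hf _) (memLpQ hQo hQb hg _)
  have e1 : ∀ (u : Euc N → ℝ), (∫ x in Q, u x ^ (2:ℝ)) = ∫ x in Q, u x ^ 2 := by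
    intro u
    refine integral_congr_ae (Eventually.of_forall fun x => ?_)
    show u x ^ (2:ℝ) = u x ^ (2:ℕ)
    rw [show (2:ℝ) = ((2:ℕ):ℝ) by norm_num, Real.rpow_natCast]
  rw [e1, e1] at h
  have e2 : ∀ (y : ℝ), y ^ (1/(2:ℝ)) = Real.sqrt y := fun y => (Real.sqrt_eq_rpow y).symm
  rw [e2, e2] at h
  exact h

/-- components of `h1Q` squared bounds -/
lemma h1_val_sq (hQb : Bornology.IsBounded Q) (v : Euc N → ℝ) :
    (∫ x in Q, ‖v x‖ ^ 2) ≤ (h1Q Q v) ^ 2 := by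
  rw [h1Q, Real.sq_sqrt (by positivity)]
  have : 0 ≤ ∫ x in Q, ‖iteratedFDeriv ℝ 1 v x‖ ^ 2 := by positivity
  linarith

lemma h1_fderiv_sq (hQb : Bornology.IsBounded Q) (v : Euc N → ℝ) :
    (∫ x in Q, ‖fderiv ℝ v x‖ ^ 2) ≤ (h1Q Q v) ^ 2 := by
  rw [h1Q, Real.sq_sqrt (by positivity)]
  have he : (∫ x in Q, ‖fderiv ℝ v x‖ ^ 2) = ∫ x in Q, ‖iteratedFDeriv ℝ 1 v x‖ ^ 2 := by
    exact integral_congr_ae (Eventually.of_forall fun x => by simp [norm_iter1_eq])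
  rw [he]
  have : 0 ≤ ∫ x in Q, ‖v x‖ ^ 2 := by positivity
  linarith

lemma h1Q_nonneg (v : Euc N → ℝ) : 0 ≤ h1Q Q v := Real.sqrt_nonneg _

end Aux

section GNS

open ENNReal NNReal Module

variable {N : ℕ}

lemma gns_core (Q : Set (Euc N)) (hQb : Bornology.IsBounded Q)
    {p : ℝ≥0} (hp : 1 ≤ p) (h2p : p < finrank ℝ (Euc N))
    (hpq : (p:ℝ)⁻¹ - (finrank ℝ (Euc N) : ℝ)⁻¹ ≤ ((6:ℝ≥0):ℝ)⁻¹) (hp2 : p ≤ 2) :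
    ∃ C : ℝ≥0∞, C ≠ ⊤ ∧ ∀ ψ : Euc N → ℝ, ContDiff ℝ 1 ψ → tsupport ψ ⊆ Q →
      eLpNorm ψ 6 (volume.restrict Q) ≤ C * eLpNorm (fderiv ℝ ψ) 2 (volume.restrict Q) := by
  set e : ℝ := 1 / (p:ℝ) - 1 / 2 with he
  have he0 : 0 ≤ e := by
    have : (0:ℝ) < p := by exact_mod_cast lt_of_lt_of_le one_pos hp
    have h2 : (p:ℝ) ≤ 2 := by exact_mod_cast hp2
    rw [he]; rw [sub_nonneg]
    gcongr
  refine ⟨(eLpNormLESNormFDerivOfLeConst ℝ volume Q p 6 : ℝ≥0∞) * (volume Q) ^ e,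
    ENNReal.mul_ne_top coe_ne_top (ENNReal.rpow_ne_top_of_nonneg he0 hQb.measure_lt_top.ne),
    fun ψ hψ hsupp => ?_⟩
  have hs : Function.support ψ ⊆ Q := (subset_tsupport ψ).trans hsupp
  have hfs : Function.support (fderiv ℝ ψ) ⊆ Q := (support_fderiv_subset ℝ).trans hsupp
  have hgns := eLpNorm_le_eLpNorm_fderiv_of_le (F := ℝ) volume hψ hs hp h2p hpq hQb
  calc eLpNorm ψ 6 (volume.restrict Q) ≤ eLpNorm ψ 6 volume :=
        eLpNorm_mono_measure _ Measure.restrict_le_self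
    _ ≤ eLpNormLESNormFDerivOfLeConst ℝ volume Q p 6 * eLpNorm (fderiv ℝ ψ) p volume := hgns
    _ = eLpNormLESNormFDerivOfLeConst ℝ volume Q p 6
          * eLpNorm (fderiv ℝ ψ) p (volume.restrict Q) := by
        rw [eLpNorm_restrict_eq_of_support_subset (ε := Euc N →L[ℝ] ℝ) (by exact hfs)]
    _ ≤ eLpNormLESNormFDerivOfLeConst ℝ volume Q p 6
          * (eLpNorm (fderiv ℝ ψ) 2 (volume.restrict Q) * (volume.restrict Q) Set.univ ^ e) := by
        gcongr
        exact eLpNorm_le_eLpNorm_mul_rpow_measure_univ (by exact_mod_cast hp2)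
          ((hψ.continuous_fderiv one_ne_zero).aestronglyMeasurable)
    _ = _ := by rw [Measure.restrict_apply_univ]; ring

lemma gns_N (hN : N = 2 ∨ N = 3) (Q : Set (Euc N)) (hQb : Bornology.IsBounded Q) :
    ∃ C : ℝ≥0∞, C ≠ ⊤ ∧ ∀ ψ : Euc N → ℝ, ContDiff ℝ 1 ψ → tsupport ψ ⊆ Q →
      eLpNorm ψ 6 (volume.restrict Q) ≤ C * eLpNorm (fderiv ℝ ψ) 2 (volume.restrict Q) := by
  rcases hN with h | h <;> subst h
  · refine gns_core Q hQb (p := 3/2)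
      (by exact_mod_cast (show (1:ℝ) ≤ 3/2 by norm_num)) ?_ ?_
      (by exact_mod_cast (show (3/2:ℝ) ≤ 2 by norm_num))
    · rw [finrank_euclideanSpace_fin]
      exact_mod_cast (show (3/2:ℝ) < 2 by norm_num)
    · rw [finrank_euclideanSpace_fin]; push_cast; norm_num
  · refine gns_core Q hQb (p := 2)
      (by exact_mod_cast (show (1:ℝ) ≤ 2 by norm_num)) ?_ ?_ le_rfl
    · rw [finrank_euclideanSpace_fin]; norm_num
    · rw [finrank_euclideanSpace_fin]; push_cast; norm_num

/-- The L⁶ bound: key Sobolev estimate in real form. -/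
lemma L6real (hN : N = 2 ∨ N = 3) (Q : Set (Euc N)) (hQo : IsOpen Q)
    (hQb : Bornology.IsBounded Q) :
    ∃ C : ℝ, 0 < C ∧ ∀ φ : Euc N → ℝ, IsTest Q (fun x => φ x + 1) →
      (∫ x in Q, ‖φ x‖ ^ 6) ≤ C * (1 + h1Q Q φ) ^ 6 := by
  obtain ⟨C₀, hC₀top, hgns⟩ := gns_N hN Q hQb
  set μ := volume.restrict Q
  set K0 : ℝ≥0∞ := eLpNorm (fun _ : Euc N => (1:ℝ)) 6 μ with hK0def
  have hK0top : K0 ≠ ⊤ := (memLpQ hQo hQb continuous_const 6).eLpNorm_ne_top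
  refine ⟨(C₀.toReal + K0.toReal + 1) ^ 6, by positivity, fun φ hT => ?_⟩
  obtain ⟨hsm, hcs, hsup⟩ := hT
  set ψ : Euc N → ℝ := fun x => φ x + 1 with hψdef
  have hψ1 : ContDiff ℝ 1 ψ := hsm.of_le (mod_cast le_top)
  have hφsm : ContDiff ℝ 1 φ := by
    have h' : ContDiff ℝ 1 (fun x => ψ x - 1) := (hsm.sub contDiff_const).of_le (mod_cast le_top)
    simpa [hψdef] using h'
  have hφc : Continuous φ := hφsm.continuous
  have hfd : fderiv ℝ ψ = fderiv ℝ φ := by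
    funext x; exact fderiv_add_const 1
  have hh1 : 0 ≤ h1Q Q φ := h1Q_nonneg φ
  have hconv2 : ENNReal.ofReal (∫ x in Q, ‖fderiv ℝ φ x‖ ^ 2) = eLpNorm (fderiv ℝ φ) 2 μ ^ 2 :=
    ofReal_integral_pow hQb (hφsm.continuous_fderiv one_ne_zero) 2 2 two_pos (by norm_num)
  have hE2 : eLpNorm (fderiv ℝ ψ) 2 μ ≤ ENNReal.ofReal (h1Q Q φ) := by
    refine ennreal_le_of_sq_le_sq ?_
    rw [hfd]
    calc eLpNorm (fderiv ℝ φ) 2 μ ^ 2 = ENNReal.ofReal (∫ x in Q, ‖fderiv ℝ φ x‖ ^ 2) :=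
          hconv2.symm
      _ ≤ ENNReal.ofReal ((h1Q Q φ) ^ 2) := ENNReal.ofReal_le_ofReal (h1_fderiv_sq hQb φ)
      _ = (ENNReal.ofReal (h1Q Q φ)) ^ 2 := by rw [ENNReal.ofReal_pow hh1]
  have hconv6 : ENNReal.ofReal (∫ x in Q, ‖φ x‖ ^ 6) = eLpNorm φ 6 μ ^ 6 :=
    ofReal_integral_pow hQb hφc 6 6 (by norm_num) (by norm_num)
  have htri : eLpNorm φ 6 μ ≤ eLpNorm ψ 6 μ + K0 := by
    have heq : eLpNorm φ 6 μ = eLpNorm (ψ - fun _ : Euc N => (1:ℝ)) 6 μ := by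
      congr 1; funext x; simp [hψdef]
    rw [heq]
    exact eLpNorm_sub_le hψ1.continuous.aestronglyMeasurable
      continuous_const.aestronglyMeasurable (by norm_num)
  have hmain : eLpNorm φ 6 μ ≤ ENNReal.ofReal (C₀.toReal * h1Q Q φ + K0.toReal) := by
    calc eLpNorm φ 6 μ ≤ eLpNorm ψ 6 μ + K0 := htri
      _ ≤ C₀ * eLpNorm (fderiv ℝ ψ) 2 μ + K0 := add_le_add_left (hgns ψ hψ1 hsup) _
      _ ≤ C₀ * ENNReal.ofReal (h1Q Q φ) + K0 := add_le_add_left (mul_le_mul_right hE2 _) _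
      _ = ENNReal.ofReal (C₀.toReal * h1Q Q φ + K0.toReal) := by
          rw [ENNReal.ofReal_add (by positivity) toReal_nonneg,
            ENNReal.ofReal_mul toReal_nonneg, ENNReal.ofReal_toReal hC₀top,
            ENNReal.ofReal_toReal hK0top]
  have h6 : ENNReal.ofReal (∫ x in Q, ‖φ x‖ ^ 6)
      ≤ ENNReal.ofReal ((C₀.toReal * h1Q Q φ + K0.toReal) ^ 6) := by
    rw [hconv6, ENNReal.ofReal_pow (by positivity)]
    exact pow_le_pow_left' hmain 6
  have hfin : (∫ x in Q, ‖φ x‖ ^ 6) ≤ (C₀.toReal * h1Q Q φ + K0.toReal) ^ 6 :=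
    (ENNReal.ofReal_le_ofReal_iff (by positivity)).1 h6
  refine hfin.trans ?_
  have hstep : C₀.toReal * h1Q Q φ + K0.toReal ≤ (C₀.toReal + K0.toReal + 1) * (1 + h1Q Q φ) := by
    nlinarith [toReal_nonneg (a := C₀), toReal_nonneg (a := K0), hh1]
  calc (C₀.toReal * h1Q Q φ + K0.toReal) ^ 6
      ≤ ((C₀.toReal + K0.toReal + 1) * (1 + h1Q Q φ)) ^ 6 :=
        pow_le_pow_left₀ (by positivity) hstep 6
    _ = _ := by rw [mul_pow]

end GNS

section Main

variable {N : ℕ}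

lemma test_cd {φ : Euc N → ℝ} (h : ContDiff ℝ (⊤:ℕ∞) (fun x => φ x + 1)) :
    ContDiff ℝ 1 φ := by
  have h' : ContDiff ℝ 1 (fun x => (φ x + 1) - 1) := (h.sub contDiff_const).of_le (mod_cast le_top)
  simpa using h'

set_option maxHeartbeats 2000000 in
theorem statement0 {N : ℕ} (hN : N = 2 ∨ N = 3) (Q : Set (Euc N)) (hQo : IsOpen Q)
    (hQb : Bornology.IsBounded Q) :
    ∃ c > 0, ∀ φ₁ φ₂ : Euc N → ℝ,
      IsTest Q (fun x => φ₁ x + 1) → IsTest Q (fun x => φ₂ x + 1) →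
      |funcB Q φ₁ - funcB Q φ₂| ≤
        c * (1 + h1Q Q φ₁ ^ 3 + h1Q Q φ₂ ^ 3) * h1Q Q (fun x => φ₁ x - φ₂ x) := by
  obtain ⟨C6, hC6pos, hL6⟩ := L6real hN Q hQo hQb
  set V : ℝ := (volume Q).toReal with hV
  set sV : ℝ := Real.sqrt V with hsV
  set sC : ℝ := Real.sqrt C6 with hsC
  have hsV0 : 0 ≤ sV := Real.sqrt_nonneg _
  have hsC0 : 0 ≤ sC := Real.sqrt_nonneg _
  refine ⟨3 + 3 * sV + 42 * sC, by positivity, fun φ₁ φ₂ hT1 hT2 => ?_⟩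
  have hφ₁sm : ContDiff ℝ 1 φ₁ := test_cd hT1.1
  have hφ₂sm : ContDiff ℝ 1 φ₂ := test_cd hT2.1
  have hc1 : Continuous φ₁ := hφ₁sm.continuous
  have hc2 : Continuous φ₂ := hφ₂sm.continuous
  have hf1 : Continuous (fun x => fderiv ℝ φ₁ x) := hφ₁sm.continuous_fderiv one_ne_zero
  have hf2 : Continuous (fun x => fderiv ℝ φ₂ x) := hφ₂sm.continuous_fderiv one_ne_zero
  set d : Euc N → ℝ := fun x => φ₁ x - φ₂ x with hddef
  have hd : ContDiff ℝ 1 d := hφ₁sm.sub hφ₂sm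
  have hfdc : Continuous (fun x => fderiv ℝ d x) := hd.continuous_fderiv one_ne_zero
  set a : ℝ := h1Q Q φ₁ with ha
  set b : ℝ := h1Q Q φ₂ with hb
  set D : ℝ := h1Q Q d with hD
  have ha0 : 0 ≤ a := h1Q_nonneg _
  have hb0 : 0 ≤ b := h1Q_nonneg _
  have hD0 : 0 ≤ D := h1Q_nonneg _
  -- rewrite funcB via fderiv
  set g₁ : Euc N → ℝ := fun x => (1/2) * ‖fderiv ℝ φ₁ x‖^2 + (1/4) * ((φ₁ x)^2 - 1)^2 with hg₁
  set g₂ : Euc N → ℝ := fun x => (1/2) * ‖fderiv ℝ φ₂ x‖^2 + (1/4) * ((φ₂ x)^2 - 1)^2 with hg₂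
  have hg₁c : Continuous g₁ :=
    (continuous_const.mul (hf1.norm.pow 2)).add
      (continuous_const.mul (((hc1.pow 2).sub continuous_const).pow 2))
  have hg₂c : Continuous g₂ :=
    (continuous_const.mul (hf2.norm.pow 2)).add
      (continuous_const.mul (((hc2.pow 2).sub continuous_const).pow 2))
  have hBrw : ∀ (χ : Euc N → ℝ),
      funcB Q χ = ∫ x in Q, ((1/2) * ‖fderiv ℝ χ x‖^2 + (1/4) * ((χ x)^2 - 1)^2) := by
    intro χ
    unfold funcB
    exact integral_congr_ae (Eventually.of_forall fun x => by simp only [norm_grad_eq])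
  have hsplit : funcB Q φ₁ - funcB Q φ₂ = ∫ x in Q, (g₁ x - g₂ x) := by
    rw [hBrw φ₁, hBrw φ₂, integral_sub (intQ hQb hg₁c) (intQ hQb hg₂c)]
  -- auxiliary functions
  set F : Euc N → ℝ := fun x => ‖fderiv ℝ φ₁ x‖ + ‖fderiv ℝ φ₂ x‖ with hF
  set H : Euc N → ℝ := fun x => ‖fderiv ℝ d x‖ with hH
  set P : Euc N → ℝ := fun x => (|φ₁ x| + |φ₂ x|) * ((φ₁ x)^2 + (φ₂ x)^2 + 2) with hP
  have hFc : Continuous F := hf1.norm.add hf2.norm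
  have hHc : Continuous H := hfdc.norm
  have hPc : Continuous P :=
    (hc1.abs.add hc2.abs).mul (((hc1.pow 2).add (hc2.pow 2)).add continuous_const)
  have hF0 : ∀ x, 0 ≤ F x := fun x => by positivity
  have hH0 : ∀ x, 0 ≤ H x := fun x => norm_nonneg _
  have hP0 : ∀ x, 0 ≤ P x := fun x => by positivity
  have hfdx : ∀ x, fderiv ℝ d x = fderiv ℝ φ₁ x - fderiv ℝ φ₂ x := fun x =>
    fderiv_sub (hφ₁sm.differentiable one_ne_zero x) (hφ₂sm.differentiable one_ne_zero x)
  -- pointwise bound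
  have hptw : ∀ x, |g₁ x - g₂ x| ≤ (1/2) * (F x * H x) + (1/4) * (|d x| * P x) := by
    intro x
    have e : g₁ x - g₂ x =
        (1/2) * (‖fderiv ℝ φ₁ x‖^2 - ‖fderiv ℝ φ₂ x‖^2)
          + (1/4) * (((φ₁ x)^2 - 1)^2 - ((φ₂ x)^2 - 1)^2) := by
      simp only [hg₁, hg₂]; ring
    rw [e]
    refine (abs_add_le _ _).trans ?_
    rw [abs_mul, abs_mul, abs_of_pos (show (0:ℝ) < 1/2 by norm_num),
      abs_of_pos (show (0:ℝ) < 1/4 by norm_num)]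
    have h1 : |‖fderiv ℝ φ₁ x‖^2 - ‖fderiv ℝ φ₂ x‖^2| ≤ F x * H x := by
      have := normsq_diff (fderiv ℝ φ₁ x) (fderiv ℝ φ₂ x)
      rwa [← hfdx x] at this
    have h2 : |((φ₁ x)^2 - 1)^2 - ((φ₂ x)^2 - 1)^2| ≤ |d x| * P x := quart_ptwise (φ₁ x) (φ₂ x)
    gcongr
  have habs : |funcB Q φ₁ - funcB Q φ₂| ≤ ∫ x in Q, |g₁ x - g₂ x| := by
    rw [hsplit]
    have := norm_integral_le_integral_norm (μ := volume.restrict Q) (f := fun x => g₁ x - g₂ x)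
    simpa [Real.norm_eq_abs] using this
  have hmono : (∫ x in Q, |g₁ x - g₂ x|)
      ≤ ∫ x in Q, ((1/2) * (F x * H x) + (1/4) * (|d x| * P x)) := by
    refine integral_mono (intQ hQb (hg₁c.sub hg₂c).abs) (intQ hQb ?_) hptw
    exact (continuous_const.mul (hFc.mul hHc)).add
      (continuous_const.mul ((hd.continuous.abs).mul hPc))
  have hsplit2 : (∫ x in Q, ((1/2) * (F x * H x) + (1/4) * (|d x| * P x)))
      = (1/2) * (∫ x in Q, F x * H x) + (1/4) * ∫ x in Q, |d x| * P x := by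
    rw [integral_add (f := fun x => (1/2) * (F x * H x)) (g := fun x => (1/4) * (|d x| * P x))
      (intQ hQb (continuous_const.mul (hFc.mul hHc)))
      (intQ hQb (continuous_const.mul ((hd.continuous.abs).mul hPc))),
      integral_const_mul, integral_const_mul]
  -- CS bound for gradient part
  have hFH : (∫ x in Q, F x * H x) ≤ 2 * (a + b) * D := by
    have hcs := myCS hQo hQb hFc hHc hF0 hH0
    have hF2 : (∫ x in Q, F x ^ 2) ≤ (2 * (a + b))^2 := by
      have hpm : (∫ x in Q, F x ^ 2)
          ≤ ∫ x in Q, (2 * ‖fderiv ℝ φ₁ x‖^2 + 2 * ‖fderiv ℝ φ₂ x‖^2) := by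
        refine integral_mono (intQ hQb (hFc.pow 2)) (intQ hQb ?_) (fun x => ?_)
        · exact (continuous_const.mul (hf1.norm.pow 2)).add
            (continuous_const.mul (hf2.norm.pow 2))
        · simp only [hF]
          nlinarith [sq_nonneg (‖fderiv ℝ φ₁ x‖ - ‖fderiv ℝ φ₂ x‖)]
      rw [integral_add (f := fun x => 2 * ‖fderiv ℝ φ₁ x‖^2) (g := fun x => 2 * ‖fderiv ℝ φ₂ x‖^2)
        (intQ hQb (continuous_const.mul (hf1.norm.pow 2)))
        (intQ hQb (continuous_const.mul (hf2.norm.pow 2))),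
        integral_const_mul, integral_const_mul] at hpm
      have e₁ : (∫ x in Q, ‖fderiv ℝ φ₁ x‖ ^ 2) ≤ a ^ 2 := h1_fderiv_sq hQb φ₁
      have e₂ : (∫ x in Q, ‖fderiv ℝ φ₂ x‖ ^ 2) ≤ b ^ 2 := h1_fderiv_sq hQb φ₂
      nlinarith [mul_nonneg ha0 hb0]
    have hH2 : (∫ x in Q, H x ^ 2) ≤ D ^ 2 := h1_fderiv_sq hQb d
    calc (∫ x in Q, F x * H x)
        ≤ Real.sqrt (∫ x in Q, F x ^ 2) * Real.sqrt (∫ x in Q, H x ^ 2) := hcs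
      _ ≤ Real.sqrt ((2 * (a + b))^2) * Real.sqrt (D^2) :=
          mul_le_mul (Real.sqrt_le_sqrt hF2) (Real.sqrt_le_sqrt hH2)
            (Real.sqrt_nonneg _) (Real.sqrt_nonneg _)
      _ = 2 * (a + b) * D := by rw [Real.sqrt_sq (by positivity), Real.sqrt_sq hD0]
  -- CS bound for quartic part
  have hdP : (∫ x in Q, |d x| * P x)
      ≤ D * (10 * (sV + sC * (1 + a)^3 + sC * (1 + b)^3)) := by
    have hcs := myCS hQo hQb hd.continuous.abs hPc (fun x => abs_nonneg _) hP0
    have hd2 : (∫ x in Q, |d x| ^ 2) ≤ D ^ 2 := by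
      have e : (∫ x in Q, |d x| ^ 2) = ∫ x in Q, ‖d x‖ ^ 2 :=
        integral_congr_ae (Eventually.of_forall fun x => by simp only [Real.norm_eq_abs])
      rw [e]; exact h1_val_sq hQb d
    have hP2 : (∫ x in Q, P x ^ 2) ≤ 100 * (V + C6 * (1 + a)^6 + C6 * (1 + b)^6) := by
      have hpm : (∫ x in Q, P x ^ 2)
          ≤ ∫ x in Q, (100 * ((1:ℝ) + ‖φ₁ x‖^6 + ‖φ₂ x‖^6)) := by
        refine integral_mono (intQ hQb (hPc.pow 2)) (intQ hQb ?_) (fun x => ?_)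
        · exact continuous_const.mul ((continuous_const.add (hc1.norm.pow 6)).add
            (hc2.norm.pow 6))
        · have hsix := sixbound |φ₁ x| |φ₂ x|
          rw [sq_abs, sq_abs] at hsix
          simpa only [hP, Real.norm_eq_abs, abs_pow] using hsix
      have e : (∫ x in Q, (100 * ((1:ℝ) + ‖φ₁ x‖^6 + ‖φ₂ x‖^6)))
          = 100 * ((∫ x in Q, (1:ℝ)) + (∫ x in Q, ‖φ₁ x‖^6) + ∫ x in Q, ‖φ₂ x‖^6) := by
        have i1 : IntegrableOn (fun x => (1:ℝ) + ‖φ₁ x‖^6) Q :=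
          (intQ hQb continuous_const).add (intQ hQb (hc1.norm.pow 6))
        have i2 : IntegrableOn (fun x => ‖φ₂ x‖^6) Q := intQ hQb (hc2.norm.pow 6)
        have i3 : IntegrableOn (fun x => (1:ℝ)) Q := intQ hQb continuous_const
        have i4 : IntegrableOn (fun x => ‖φ₁ x‖^6) Q := intQ hQb (hc1.norm.pow 6)
        rw [integral_const_mul, integral_add i1 i2, integral_add i3 i4]
      have eV : (∫ x in Q, (1:ℝ)) = V := by
        rw [setIntegral_const, smul_eq_mul, mul_one]; rfl
      have hJ1 : (∫ x in Q, ‖φ₁ x‖^6) ≤ C6 * (1 + a)^6 := hL6 φ₁ hT1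
      have hJ2 : (∫ x in Q, ‖φ₂ x‖^6) ≤ C6 * (1 + b)^6 := hL6 φ₂ hT2
      rw [e, eV] at hpm
      linarith
    have hsqrtP : Real.sqrt (∫ x in Q, P x ^ 2)
        ≤ 10 * (sV + sC * (1 + a)^3 + sC * (1 + b)^3) := by
      have h10 : Real.sqrt 100 = 10 := by
        rw [show (100:ℝ) = 10^2 by norm_num, Real.sqrt_sq (by norm_num)]
      have hca : Real.sqrt (C6 * (1 + a)^6) = sC * (1 + a)^3 := by
        rw [Real.sqrt_mul hC6pos.le, show (1+a)^6 = ((1+a)^3)^2 by ring,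
          Real.sqrt_sq (by positivity)]
      have hcb : Real.sqrt (C6 * (1 + b)^6) = sC * (1 + b)^3 := by
        rw [Real.sqrt_mul hC6pos.le, show (1+b)^6 = ((1+b)^3)^2 by ring,
          Real.sqrt_sq (by positivity)]
      calc Real.sqrt (∫ x in Q, P x ^ 2)
          ≤ Real.sqrt (100 * (V + C6 * (1 + a)^6 + C6 * (1 + b)^6)) := Real.sqrt_le_sqrt hP2
        _ = 10 * Real.sqrt (V + C6 * (1 + a)^6 + C6 * (1 + b)^6) := by
            rw [Real.sqrt_mul (by norm_num : (0:ℝ) ≤ 100), h10]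
        _ ≤ 10 * (Real.sqrt (V + C6 * (1 + a)^6) + Real.sqrt (C6 * (1 + b)^6)) := by
            have hV0 : 0 ≤ V := ENNReal.toReal_nonneg
            have := sqrt_add_le' (V + C6 * (1 + a)^6) (C6 * (1 + b)^6)
              (by positivity) (by positivity)
            linarith
        _ ≤ 10 * (sV + sC * (1 + a)^3 + sC * (1 + b)^3) := by
            have hV0 : 0 ≤ V := ENNReal.toReal_nonneg
            have h2 := sqrt_add_le' V (C6 * (1 + a)^6) hV0 (by positivity)
            rw [hca, hcb] at *
            linarith
    calc (∫ x in Q, |d x| * P x)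
        ≤ Real.sqrt (∫ x in Q, |d x| ^ 2) * Real.sqrt (∫ x in Q, P x ^ 2) := hcs
      _ ≤ D * (10 * (sV + sC * (1 + a)^3 + sC * (1 + b)^3)) := by
          refine mul_le_mul ?_ hsqrtP (Real.sqrt_nonneg _) hD0
          calc Real.sqrt (∫ x in Q, |d x| ^ 2) ≤ Real.sqrt (D^2) := Real.sqrt_le_sqrt hd2
            _ = D := Real.sqrt_sq hD0
  -- assemble
  have hcoeff : (a + b) + (5/2) * (sV + sC * (1 + a)^3 + sC * (1 + b)^3)
      ≤ (3 + 3 * sV + 42 * sC) * (1 + a^3 + b^3) := by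
    have c1 := cube_bound a ha0
    have c2 := cube_bound b hb0
    have l1 := lin_bound a ha0
    have l2 := lin_bound b hb0
    have hS : (0:ℝ) ≤ a^3 + b^3 := by positivity
    nlinarith [mul_le_mul_of_nonneg_left c1 hsC0, mul_le_mul_of_nonneg_left c2 hsC0,
      mul_nonneg hsV0 hS, mul_nonneg hsC0 hS]
  calc |funcB Q φ₁ - funcB Q φ₂|
      ≤ ∫ x in Q, |g₁ x - g₂ x| := habs
    _ ≤ (1/2) * (∫ x in Q, F x * H x) + (1/4) * ∫ x in Q, |d x| * P x := by
        rw [← hsplit2]; exact hmono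
    _ ≤ (1/2) * (2 * (a + b) * D) + (1/4) * (D * (10 * (sV + sC * (1 + a)^3 + sC * (1 + b)^3))) := by
        exact add_le_add (mul_le_mul_of_nonneg_left hFH (by norm_num))
          (mul_le_mul_of_nonneg_left hdP (by norm_num))
    _ = ((a + b) + (5/2) * (sV + sC * (1 + a)^3 + sC * (1 + b)^3)) * D := by ring
    _ ≤ ((3 + 3 * sV + 42 * sC) * (1 + a^3 + b^3)) * D := mul_le_mul_of_nonneg_right hcoeff hD0
    _ = (3 + 3 * sV + 42 * sC) * (1 + a^3 + b^3) * D := by ring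

end Main
end
end

section
/- There exists a constant c > 0 (depending only on Q, N) such that for all φ₁, φ₂ with φ₁ + 1, φ₂ + 1 ∈ C_0^∞(Q) one has |f(φ₁) − f(φ₂)|₂ ≤ c (1 + ‖φ₁‖_{H¹}² + ‖φ₂‖_{H¹}²) ‖φ₁ − φ₂‖_{H²}. -/
open MeasureTheory Filter Topology

open ENNReal NNReal Module

noncomputable section

namespace S19
variable {N : ℕ} {Q : Set (Euc N)}

lemma ContDiffTop.of_nat {E F : Type*} [NormedAddCommGroup E] [NormedSpace ℝ E]
    [NormedAddCommGroup F] [NormedSpace ℝ F] {f : E → F}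
    (h : ContDiff ℝ (⊤:ℕ∞) f) (n : ℕ) : ContDiff ℝ n f :=
  h.of_le (by exact_mod_cast le_top)

lemma contIter {E F : Type*} [NormedAddCommGroup E] [NormedSpace ℝ E]
    [NormedAddCommGroup F] [NormedSpace ℝ F] {f : E → F}
    (h : ContDiff ℝ (⊤:ℕ∞) f) (n : ℕ) : Continuous (iteratedFDeriv ℝ n f) :=
  (ContDiffTop.of_nat h n).continuous_iteratedFDeriv le_rfl

lemma lint_lt_top (hQo : IsOpen Q) (hQb : Bornology.IsBounded Q) {F : Type*}
    [NormedAddCommGroup F] {f : Euc N → F} (hf : Continuous f) :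
    ∫⁻ x in Q, (‖f x‖₊ : ℝ≥0∞) ^ 2 ∂volume < ⊤ := by
  obtain ⟨C, hC⟩ := hQb.isCompact_closure.exists_bound_of_continuousOn hf.continuousOn
  calc ∫⁻ x in Q, (‖f x‖₊ : ℝ≥0∞) ^ 2 ∂volume
      ≤ ∫⁻ _ in Q, ENNReal.ofReal C ^ 2 ∂volume := by
        refine setLIntegral_mono' hQo.measurableSet fun x hx => ?_
        gcongr
        rw [← ENNReal.ofReal_coe_nnreal, coe_nnnorm]
        exact ENNReal.ofReal_le_ofReal (hC x (subset_closure hx))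
    _ = ENNReal.ofReal C ^ 2 * volume Q := by rw [setLIntegral_const]
    _ < ⊤ := ENNReal.mul_lt_top (ENNReal.pow_lt_top ENNReal.ofReal_lt_top) hQb.measure_lt_top

lemma sq_integral_eq {F : Type*} [NormedAddCommGroup F] {f : Euc N → F} (hf : Continuous f) :
    ∫ x in Q, ‖f x‖ ^ 2 = (∫⁻ x in Q, (‖f x‖₊ : ℝ≥0∞) ^ 2 ∂volume).toReal := by
  rw [integral_eq_lintegral_of_nonneg_ae (Eventually.of_forall fun x => sq_nonneg _)
    ((hf.norm.pow 2).aestronglyMeasurable.restrict)]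
  congr 1
  refine lintegral_congr fun x => ?_
  rw [← ENNReal.ofReal_coe_nnreal, coe_nnnorm, ← ENNReal.ofReal_pow (norm_nonneg _)]

lemma eLpNorm_two_eq {F : Type*} [NormedAddCommGroup F] (f : Euc N → F) :
    eLpNorm f 2 (volume.restrict Q) = (∫⁻ x in Q, (‖f x‖₊ : ℝ≥0∞) ^ 2 ∂volume) ^ (1/2 : ℝ) := by
  rw [eLpNorm_eq_lintegral_rpow_enorm_toReal (by norm_num) (by norm_num)]
  norm_num
  rfl

lemma eLpNorm_le_ofReal_sqrt {F : Type*} [NormedAddCommGroup F] {f : Euc N → F}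
    (hfin : ∫⁻ x in Q, (‖f x‖₊ : ℝ≥0∞) ^ 2 ∂volume < ⊤) {t : ℝ}
    (ht : (∫⁻ x in Q, (‖f x‖₊ : ℝ≥0∞) ^ 2 ∂volume).toReal ≤ t) :
    eLpNorm f 2 (volume.restrict Q) ≤ ENNReal.ofReal (Real.sqrt t) := by
  rw [eLpNorm_two_eq, Real.sqrt_eq_rpow,
    ← ENNReal.ofReal_rpow_of_nonneg (le_trans ENNReal.toReal_nonneg ht) (by norm_num)]
  refine ENNReal.rpow_le_rpow ?_ (by norm_num)
  rw [← ENNReal.ofReal_toReal hfin.ne]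
  exact ENNReal.ofReal_le_ofReal ht


lemma eLpNorm_fderiv_eq (w : Euc N → ℝ) :
    eLpNorm (fderiv ℝ w) 2 (volume.restrict Q) =
      eLpNorm (iteratedFDeriv ℝ 1 w) 2 (volume.restrict Q) := by
  rw [← eLpNorm_norm (fderiv ℝ w), ← eLpNorm_norm (iteratedFDeriv ℝ 1 w)]
  congr 1
  funext x
  rw [← norm_iteratedFDeriv_zero (𝕜 := ℝ) (f := fderiv ℝ w), norm_iteratedFDeriv_fderiv]

lemma h1_bound (hQo : IsOpen Q) (hQb : Bornology.IsBounded Q) {φ : Euc N → ℝ}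
    (hφ : ContDiff ℝ (⊤:ℕ∞) φ) :
    eLpNorm (iteratedFDeriv ℝ 1 φ) 2 (volume.restrict Q) ≤ ENNReal.ofReal (h1Q Q φ) := by
  have hc : Continuous (iteratedFDeriv ℝ 1 φ) := contIter hφ 1
  unfold h1Q
  refine eLpNorm_le_ofReal_sqrt (lint_lt_top hQo hQb hc) ?_
  rw [← sq_integral_eq hc]
  exact le_add_of_nonneg_left (integral_nonneg fun x => sq_nonneg _)

lemma h2_bound₁ (hQo : IsOpen Q) (hQb : Bornology.IsBounded Q) {u : Euc N → ℝ}
    (hu : ContDiff ℝ (⊤:ℕ∞) u) :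
    eLpNorm (iteratedFDeriv ℝ 1 u) 2 (volume.restrict Q) ≤ ENNReal.ofReal (h2Q Q u) := by
  have hc : Continuous (iteratedFDeriv ℝ 1 u) := contIter hu 1
  unfold h2Q
  refine eLpNorm_le_ofReal_sqrt (lint_lt_top hQo hQb hc) ?_
  rw [← sq_integral_eq hc]
  have h1 : (0:ℝ) ≤ ∫ x in Q, ‖u x‖^2 := integral_nonneg fun x => sq_nonneg _
  have h2 : (0:ℝ) ≤ ∫ x in Q, ‖iteratedFDeriv ℝ 2 u x‖^2 := integral_nonneg fun x => sq_nonneg _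
  linarith

lemma h2_bound₂ (hQo : IsOpen Q) (hQb : Bornology.IsBounded Q) {u : Euc N → ℝ}
    (hu : ContDiff ℝ (⊤:ℕ∞) u) :
    eLpNorm (iteratedFDeriv ℝ 2 u) 2 (volume.restrict Q) ≤ ENNReal.ofReal (h2Q Q u) := by
  have hc : Continuous (iteratedFDeriv ℝ 2 u) := contIter hu 2
  unfold h2Q
  refine eLpNorm_le_ofReal_sqrt (lint_lt_top hQo hQb hc) ?_
  rw [← sq_integral_eq hc]
  have h1 : (0:ℝ) ≤ ∫ x in Q, ‖u x‖^2 := integral_nonneg fun x => sq_nonneg _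
  have h2 : (0:ℝ) ≤ ∫ x in Q, ‖iteratedFDeriv ℝ 1 u x‖^2 := integral_nonneg fun x => sq_nonneg _
  linarith

lemma sob (hN : N = 2 ∨ N = 3) (hQb : Bornology.IsBounded Q) :
    ∃ K : ℝ≥0∞, K ≠ ⊤ ∧ ∀ w : Euc N → ℝ, ContDiff ℝ (⊤:ℕ∞) w → tsupport w ⊆ Q →
      eLpNorm w 6 (volume.restrict Q) ≤
        K * eLpNorm (iteratedFDeriv ℝ 1 w) 2 (volume.restrict Q) := by
  have hrank : finrank ℝ (Euc N) = N := finrank_euclideanSpace_fin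
  obtain ⟨p, hp1, hplt, hple2, hpq⟩ : ∃ p : ℝ≥0, 1 ≤ p ∧ (p:ℝ) < N ∧ (p:ℝ≥0∞) ≤ 2 ∧
      (p:ℝ)⁻¹ - (N:ℝ)⁻¹ ≤ ((6:ℝ≥0):ℝ)⁻¹ := by
    have c2 : (2:ℝ≥0∞) = ((2:ℝ≥0):ℝ≥0∞) := by norm_num
    rcases hN with h | h <;> subst h
    · refine ⟨3/2, ?_, ?_, ?_, ?_⟩
      · rw [← NNReal.coe_le_coe]; push_cast; norm_num
      · push_cast; norm_num
      · rw [c2]; exact ENNReal.coe_le_coe.mpr (by rw [← NNReal.coe_le_coe]; push_cast; norm_num)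
      · push_cast; norm_num
    · refine ⟨2, by norm_num, by norm_num, by norm_num, by norm_num⟩
  set ν := volume.restrict Q
  refine ⟨(eLpNormLESNormFDerivOfLeConst ℝ (volume : Measure (Euc N)) Q p 6 : ℝ≥0∞) *
      (volume Q) ^ (1/(p:ℝ≥0∞).toReal - 1/(2:ℝ≥0∞).toReal), ?_, fun w hw hts => ?_⟩
  · refine ENNReal.mul_ne_top ENNReal.coe_ne_top (ENNReal.rpow_ne_top_of_nonneg ?_ hQb.measure_lt_top.ne)
    simp only [ENNReal.coe_toReal]
    rw [ENNReal.toReal_ofNat]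
    have hp0 : (0:ℝ) < p := lt_of_lt_of_le one_pos hp1
    rw [sub_nonneg, one_div, one_div]
    apply inv_anti₀ hp0
    exact_mod_cast (by exact_mod_cast hple2 : (p:ℝ) ≤ 2)
  · have hw1 : ContDiff ℝ 1 w := ContDiffTop.of_nat hw 1
    have hsupp : Function.support w ⊆ Q := subset_tsupport w |>.trans hts
    have hlt : (p:ℝ≥0) < finrank ℝ (Euc N) := by rw [hrank]; exact_mod_cast hplt
    have hpq' : (p:ℝ)⁻¹ - ((finrank ℝ (Euc N) : ℝ))⁻¹ ≤ (((6:ℝ≥0)):ℝ)⁻¹ := by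
      rw [hrank]; exact_mod_cast hpq
    have key := eLpNorm_le_eLpNorm_fderiv_of_le (volume : Measure (Euc N)) hw1 hsupp hp1 hlt hpq' hQb
    have hrest : eLpNorm w 6 ν ≤ eLpNorm w (6:ℝ≥0) (volume : Measure (Euc N)) := by
      exact eLpNorm_mono_measure _ Measure.restrict_le_self
    have hfd : eLpNorm (fderiv ℝ w) p (volume : Measure (Euc N)) = eLpNorm (fderiv ℝ w) p ν :=
      (eLpNorm_restrict_eq_of_support_subset (ε := Euc N →L[ℝ] ℝ) (μ := (volume : Measure (Euc N))) (p := (p:ℝ≥0∞)) ((support_fderiv_subset ℝ).trans hts)).symm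
    have hbump : eLpNorm (fderiv ℝ w) p ν ≤ eLpNorm (fderiv ℝ w) 2 ν *
        (ν Set.univ) ^ (1/(p:ℝ≥0∞).toReal - 1/(2:ℝ≥0∞).toReal) :=
      eLpNorm_le_eLpNorm_mul_rpow_measure_univ hple2
        ((hw1.continuous_fderiv (by simp)).aestronglyMeasurable.restrict)
    have hμ : ν Set.univ = volume Q := by simp [ν, Measure.restrict_apply_univ]
    calc eLpNorm w 6 ν ≤ eLpNorm w (6:ℝ≥0) (volume : Measure (Euc N)) := hrest
      _ ≤ eLpNormLESNormFDerivOfLeConst ℝ (volume : Measure (Euc N)) Q p 6 *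
          eLpNorm (fderiv ℝ w) p (volume : Measure (Euc N)) := key
      _ = eLpNormLESNormFDerivOfLeConst ℝ (volume : Measure (Euc N)) Q p 6 *
          eLpNorm (fderiv ℝ w) p ν := by rw [hfd]
      _ ≤ eLpNormLESNormFDerivOfLeConst ℝ (volume : Measure (Euc N)) Q p 6 *
          (eLpNorm (fderiv ℝ w) 2 ν * (volume Q) ^ (1/(p:ℝ≥0∞).toReal - 1/(2:ℝ≥0∞).toReal)) := by
          rw [← hμ]; gcongr
      _ = (eLpNormLESNormFDerivOfLeConst ℝ (volume : Measure (Euc N)) Q p 6 : ℝ≥0∞) *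
          (volume Q) ^ (1/(p:ℝ≥0∞).toReal - 1/(2:ℝ≥0∞).toReal) *
          eLpNorm (iteratedFDeriv ℝ 1 w) 2 ν := by rw [eLpNorm_fderiv_eq]; ring


lemma self_le_one_add_sq (a : ℝ≥0∞) : a ≤ 1 + a^2 := by
  rcases le_total a 1 with h | h
  · exact h.trans le_self_add
  · calc a = a * 1 := (mul_one a).symm
      _ ≤ a * a := by gcongr
      _ ≤ 1 + a^2 := by rw [← sq]; exact le_add_self

lemma mul_le_sq_add (a b : ℝ≥0∞) : a*b ≤ a^2 + b^2 := by
  rcases le_total a b with h | h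
  · calc a*b ≤ b*b := by gcongr
      _ ≤ _ := by rw [← sq]; exact le_add_self
  · calc a*b ≤ a*a := by gcongr
      _ ≤ _ := by rw [← sq]; exact le_self_add

lemma comb {a b S : ℝ≥0∞} (h1 : 1 ≤ S) (ha : a^2 ≤ S) (hb : b^2 ≤ S) :
    (1+a)*(1+b) ≤ 7*S := by
  have haS : a ≤ 2*S := (self_le_one_add_sq a).trans
    (by rw [two_mul]; exact add_le_add h1 ha)
  have hbS : b ≤ 2*S := (self_le_one_add_sq b).trans
    (by rw [two_mul]; exact add_le_add h1 hb)
  have hab : a*b ≤ 2*S := (mul_le_sq_add a b).trans (by rw [two_mul]; exact add_le_add ha hb)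
  calc (1+a)*(1+b) = 1 + (b + (a + a*b)) := by ring
    _ ≤ S + (2*S + (2*S + 2*S)) := add_le_add h1 (add_le_add hbS (add_le_add haS hab))
    _ = 7*S := by ring

end S19

theorem statement19 {N : ℕ} (hN : N = 2 ∨ N = 3) (Q : Set (Euc N)) (hQo : IsOpen Q)
    (hQb : Bornology.IsBounded Q) :
    ∃ c > 0, ∀ φ₁ φ₂ : Euc N → ℝ,
      IsTest Q (fun x => φ₁ x + 1) → IsTest Q (fun x => φ₂ x + 1) →
      lpQ Q 2 (fun x => fCH φ₁ x - fCH φ₂ x) ≤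
        c * (1 + h1Q Q φ₁ ^ 2 + h1Q Q φ₂ ^ 2) * h2Q Q (fun x => φ₁ x - φ₂ x) := by
  classical
  set ν := (volume : Measure (Euc N)).restrict Q with hν
  haveI hfin : IsFiniteMeasure ν := ⟨by
    rw [hν, Measure.restrict_apply_univ]; exact hQb.measure_lt_top⟩
  obtain ⟨K, hKfin, hK⟩ := S19.sob (Q := Q) hN hQb
  set E₆ : ℝ≥0∞ := eLpNorm (fun _ : Euc N => (-1:ℝ)) 6 ν with hE₆
  set E₃ : ℝ≥0∞ := eLpNorm (fun _ : Euc N => (-1:ℝ)) 3 ν with hE₃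
  have hE₆fin : E₆ ≠ ⊤ := (memLp_const (-1:ℝ)).2.ne
  have hE₃fin : E₃ ≠ ⊤ := (memLp_const (-1:ℝ)).2.ne
  set W : ℝ≥0∞ := K + E₆ + 1 with hW
  have hWfin : W ≠ ⊤ := by
    rw [hW]; exact ENNReal.add_ne_top.2 ⟨ENNReal.add_ne_top.2 ⟨hKfin, hE₆fin⟩, one_ne_top⟩
  set 𝒞 : ℝ≥0∞ := (N : ℝ≥0∞) + K * (21 * W ^ 2 + E₃) with h𝒞
  have h𝒞fin : 𝒞 ≠ ⊤ := by
    rw [h𝒞]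
    refine ENNReal.add_ne_top.2 ⟨ENNReal.natCast_ne_top N, ENNReal.mul_ne_top hKfin ?_⟩
    exact ENNReal.add_ne_top.2 ⟨ENNReal.mul_ne_top (by norm_num) (pow_ne_top hWfin), hE₃fin⟩
  refine ⟨𝒞.toReal + 1, by positivity, fun φ₁ φ₂ ht₁ ht₂ => ?_⟩
  -- basic smoothness and continuity facts
  have hs₁ : ContDiff ℝ (⊤:ℕ∞) φ₁ := by
    simpa using ht₁.1.sub (contDiff_const (c := (1:ℝ)))
  have hs₂ : ContDiff ℝ (⊤:ℕ∞) φ₂ := by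
    simpa using ht₂.1.sub (contDiff_const (c := (1:ℝ)))
  set u : Euc N → ℝ := fun x => φ₁ x - φ₂ x with hu
  set g : Euc N → ℝ := fun x => φ₁ x * φ₁ x + φ₁ x * φ₂ x + φ₂ x * φ₂ x - 1 with hg
  have hsu : ContDiff ℝ (⊤:ℕ∞) u := hs₁.sub hs₂
  have hcu : Continuous u := hsu.continuous
  have hcφ₁ : Continuous φ₁ := hs₁.continuous
  have hcφ₂ : Continuous φ₂ := hs₂.continuous
  have hcg : Continuous g := by
    rw [hg]; exact (((hcφ₁.mul hcφ₁).add (hcφ₁.mul hcφ₂)).add (hcφ₂.mul hcφ₂)).sub continuous_const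
  have hclap : Continuous (lap u) := by
    unfold lap
    exact continuous_finset_sum _ fun i _ =>
      (ContinuousMultilinearMap.apply ℝ (fun _ : Fin 2 => Euc N) ℝ
        ![EuclideanSpace.single i 1, EuclideanSpace.single i 1]).continuous.comp
        (S19.contIter hsu 2)
  -- second-derivative linearity and the pointwise identity
  have hit2 : ∀ (x : Euc N) (m : Fin 2 → Euc N),
      iteratedFDeriv ℝ 2 u x m = iteratedFDeriv ℝ 2 φ₁ x m - iteratedFDeriv ℝ 2 φ₂ x m := by
    intro x m
    have hu_eq : u = φ₁ + -φ₂ := funext fun y => sub_eq_add_neg _ _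
    have hneg2 : ContDiff ℝ (2:ℕ) (-φ₂) := (S19.ContDiffTop.of_nat hs₂ 2).neg
    have hadd : iteratedFDeriv ℝ 2 (φ₁ + -φ₂) x =
        iteratedFDeriv ℝ 2 φ₁ x + iteratedFDeriv ℝ 2 (-φ₂) x :=
      iteratedFDeriv_add_apply (S19.ContDiffTop.of_nat hs₁ 2).contDiffAt hneg2.contDiffAt
    rw [hu_eq, hadd, iteratedFDeriv_neg_apply]
    simp [sub_eq_add_neg]
  have hlap : ∀ x, lap u x = lap φ₁ x - lap φ₂ x := by
    intro x
    unfold lap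
    rw [← Finset.sum_sub_distrib]
    exact Finset.sum_congr rfl fun i _ => hit2 x _
  have hpoint : ∀ x, fCH φ₁ x - fCH φ₂ x = -(lap u x) + u x * g x := by
    intro x
    have h := hlap x
    simp only [fCH, hu, hg] at h ⊢
    rw [h]; ring
  -- support of u
  have hts_u : tsupport u ⊆ Q := by
    have hsub : Function.support u ⊆
        Function.support (fun x => φ₁ x + 1) ∪ Function.support (fun x => φ₂ x + 1) := by
      intro x hx
      by_contra hc
      simp only [Set.mem_union, Function.mem_support, not_or, not_not] at hc
      refine hx ?_
      show φ₁ x - φ₂ x = 0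
      have h1 := hc.1
      have h2 := hc.2
      linarith
    refine (closure_mono hsub).trans ?_
    rw [closure_union]
    exact Set.union_subset ht₁.2.2 ht₂.2.2
  -- key eLpNorm quantities
  set H : ℝ≥0∞ := ENNReal.ofReal (h2Q Q u) with hH
  set a₁ : ℝ≥0∞ := ENNReal.ofReal (h1Q Q φ₁) with ha₁
  set a₂ : ℝ≥0∞ := ENNReal.ofReal (h1Q Q φ₂) with ha₂
  set S : ℝ≥0∞ := ENNReal.ofReal (1 + h1Q Q φ₁ ^ 2 + h1Q Q φ₂ ^ 2) with hS
  have h1nn₁ : 0 ≤ h1Q Q φ₁ := Real.sqrt_nonneg _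
  have h1nn₂ : 0 ≤ h1Q Q φ₂ := Real.sqrt_nonneg _
  have h2nn : 0 ≤ h2Q Q u := Real.sqrt_nonneg _
  have hS1 : 1 ≤ S := by
    rw [hS, ← ENNReal.ofReal_one]
    exact ENNReal.ofReal_le_ofReal (by nlinarith [sq_nonneg (h1Q Q φ₁), sq_nonneg (h1Q Q φ₂)])
  have ha₁S : a₁ ^ 2 ≤ S := by
    rw [ha₁, hS, ← ENNReal.ofReal_pow h1nn₁]
    exact ENNReal.ofReal_le_ofReal (by nlinarith [sq_nonneg (h1Q Q φ₂)])
  have ha₂S : a₂ ^ 2 ≤ S := by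
    rw [ha₂, hS, ← ENNReal.ofReal_pow h1nn₂]
    exact ENNReal.ofReal_le_ofReal (by nlinarith [sq_nonneg (h1Q Q φ₁)])
  -- Sobolev bounds on φ i
  have hB : ∀ (φ : Euc N → ℝ), IsTest Q (fun x => φ x + 1) → ContDiff ℝ (⊤:ℕ∞) φ →
      eLpNorm φ 6 ν ≤ W * (1 + ENNReal.ofReal (h1Q Q φ)) := by
    intro φ ht hs
    have heq : φ = (fun x => φ x + 1) + (fun _ => (-1:ℝ)) := funext fun x => by simp
    have htri : eLpNorm φ 6 ν ≤ eLpNorm (fun x => φ x + 1) 6 ν + E₆ := by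
      conv_lhs => rw [heq]
      exact eLpNorm_add_le ((hs.continuous.add continuous_const).aestronglyMeasurable.restrict)
        (continuous_const.aestronglyMeasurable.restrict) (by norm_num)
    have hsob := hK (fun x => φ x + 1) ht.1 ht.2.2
    have hder : eLpNorm (iteratedFDeriv ℝ 1 (fun x => φ x + 1)) 2 ν =
        eLpNorm (iteratedFDeriv ℝ 1 φ) 2 ν := by
      rw [← S19.eLpNorm_fderiv_eq, ← S19.eLpNorm_fderiv_eq]
      congr 1
      funext x
      exact fderiv_add_const _
    have hh1 := S19.h1_bound (Q := Q) hQo hQb hs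
    calc eLpNorm φ 6 ν ≤ eLpNorm (fun x => φ x + 1) 6 ν + E₆ := htri
      _ ≤ K * eLpNorm (iteratedFDeriv ℝ 1 φ) 2 ν + E₆ := by
          rw [← hder]; exact add_le_add_left hsob _
      _ ≤ K * ENNReal.ofReal (h1Q Q φ) + E₆ := add_le_add_left (mul_le_mul_right hh1 K) E₆
      _ ≤ W * ENNReal.ofReal (h1Q Q φ) + W * 1 := by
          have hKW : K ≤ W := by rw [hW]; exact le_self_add.trans le_self_add
          have hEW : E₆ ≤ W * 1 := by
            rw [mul_one, hW]; exact le_add_self.trans le_self_add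
          exact add_le_add (mul_le_mul_left hKW _) hEW
      _ = W * (1 + ENNReal.ofReal (h1Q Q φ)) := by ring
  have hB₁ := hB φ₁ ht₁ hs₁
  have hB₂ := hB φ₂ ht₂ hs₂
  -- bound on g in L³
  have hmul6 : ∀ (f₁ f₂ : Euc N → ℝ), Continuous f₁ → Continuous f₂ →
      eLpNorm (fun x => f₁ x * f₂ x) 3 ν ≤ eLpNorm f₁ 6 ν * eLpNorm f₂ 6 ν := by
    intro f₁ f₂ hc₁ hc₂
    have h := eLpNorm_smul_le_mul_eLpNorm (𝕜 := ℝ) (E := ℝ) (μ := ν) (p := 6) (q := 6) (r := 3)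
      (f := f₂) (φ := f₁) (hc₂.aestronglyMeasurable.restrict) (hc₁.aestronglyMeasurable.restrict)
      (hpqr := ⟨by rw [← one_div, ← one_div, show (1:ℝ≥0∞)/3 = 1/6+1/6 by
            rw [ENNReal.div_add_div_same, ENNReal.div_eq_div_iff] <;> norm_num]⟩)
    simpa [Pi.smul_apply, smul_eq_mul, Pi.mul_def] using h
  have hgtri : eLpNorm g 3 ν ≤ eLpNorm (fun x => φ₁ x * φ₁ x) 3 ν +
      (eLpNorm (fun x => φ₁ x * φ₂ x) 3 ν + (eLpNorm (fun x => φ₂ x * φ₂ x) 3 ν + E₃)) := by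
    have hg_eq : g = (fun x => φ₁ x * φ₁ x) + ((fun x => φ₁ x * φ₂ x) +
        ((fun x => φ₂ x * φ₂ x) + (fun _ => (-1:ℝ)))) := by
      rw [hg]; funext x; simp [Pi.add_apply]; ring
    conv_lhs => rw [hg_eq]
    refine (eLpNorm_add_le ((hcφ₁.mul hcφ₁).aestronglyMeasurable.restrict) ?_ (by norm_num)).trans ?_
    · exact ((hcφ₁.mul hcφ₂).add ((hcφ₂.mul hcφ₂).add continuous_const)).aestronglyMeasurable.restrict
    gcongr
    · exact le_rfl
    refine (eLpNorm_add_le ((hcφ₁.mul hcφ₂).aestronglyMeasurable.restrict) ?_ (by norm_num)).trans ?_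
    · exact ((hcφ₂.mul hcφ₂).add continuous_const).aestronglyMeasurable.restrict
    gcongr
    · exact le_rfl
    exact eLpNorm_add_le ((hcφ₂.mul hcφ₂).aestronglyMeasurable.restrict)
      (continuous_const.aestronglyMeasurable.restrict) (by norm_num)
  have hgb : eLpNorm g 3 ν ≤ (21 * W ^ 2 + E₃) * S := by
    have hp : ∀ i j : ℝ≥0∞, i ≤ W * (1 + a₁) ∨ i ≤ W * (1 + a₂) → True := fun _ _ _ => trivial
    have h11 : eLpNorm (fun x => φ₁ x * φ₁ x) 3 ν ≤ W^2 * (7 * S) := by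
      refine (hmul6 φ₁ φ₁ hcφ₁ hcφ₁).trans ?_
      calc eLpNorm φ₁ 6 ν * eLpNorm φ₁ 6 ν ≤ (W * (1 + a₁)) * (W * (1 + a₁)) := by gcongr
        _ = W^2 * ((1+a₁)*(1+a₁)) := by ring
        _ ≤ W^2 * (7 * S) := mul_le_mul_right (S19.comb hS1 ha₁S ha₁S) _
    have h12 : eLpNorm (fun x => φ₁ x * φ₂ x) 3 ν ≤ W^2 * (7 * S) := by
      refine (hmul6 φ₁ φ₂ hcφ₁ hcφ₂).trans ?_
      calc eLpNorm φ₁ 6 ν * eLpNorm φ₂ 6 ν ≤ (W * (1 + a₁)) * (W * (1 + a₂)) := by gcongr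
        _ = W^2 * ((1+a₁)*(1+a₂)) := by ring
        _ ≤ W^2 * (7 * S) := mul_le_mul_right (S19.comb hS1 ha₁S ha₂S) _
    have h22 : eLpNorm (fun x => φ₂ x * φ₂ x) 3 ν ≤ W^2 * (7 * S) := by
      refine (hmul6 φ₂ φ₂ hcφ₂ hcφ₂).trans ?_
      calc eLpNorm φ₂ 6 ν * eLpNorm φ₂ 6 ν ≤ (W * (1 + a₂)) * (W * (1 + a₂)) := by gcongr
        _ = W^2 * ((1+a₂)*(1+a₂)) := by ring
        _ ≤ W^2 * (7 * S) := mul_le_mul_right (S19.comb hS1 ha₂S ha₂S) _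
    calc eLpNorm g 3 ν ≤ _ := hgtri
      _ ≤ W^2 * (7*S) + (W^2 * (7*S) + (W^2 * (7*S) + E₃ * S)) :=
          add_le_add h11 (add_le_add h12 (add_le_add h22
            (le_mul_of_one_le_right zero_le hS1)))
      _ = (21 * W ^ 2 + E₃) * S := by ring
  -- Sobolev bound on u in L⁶
  have hub : eLpNorm u 6 ν ≤ K * H := by
    refine (hK u hsu hts_u).trans ?_
    gcongr
    exact S19.h2_bound₁ hQo hQb hsu
  -- bound on lap u
  have hlapb : eLpNorm (lap u) 2 ν ≤ (N : ℝ≥0∞) * H := by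
    have hstep : eLpNorm (lap u) 2 ν ≤
        ((N : ℝ≥0) : ℝ≥0∞) * eLpNorm (iteratedFDeriv ℝ 2 u) 2 ν := by
      have := eLpNorm_le_nnreal_smul_eLpNorm_of_ae_le_mul (μ := ν) (c := (N : ℝ≥0))
        (f := lap u) (g := iteratedFDeriv ℝ 2 u) (Eventually.of_forall fun x => ?_) 2
      · simpa [ENNReal.smul_def] using this
      · have hone : ∀ i : Fin N,
            ‖iteratedFDeriv ℝ 2 u x ![EuclideanSpace.single i 1, EuclideanSpace.single i 1]‖ ≤
              ‖iteratedFDeriv ℝ 2 u x‖ := by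
          intro i
          have h := (iteratedFDeriv ℝ 2 u x).le_opNorm
            ![EuclideanSpace.single i 1, EuclideanSpace.single i 1]
          simpa [Fin.prod_univ_two, EuclideanSpace.norm_single] using h
        calc ‖lap u x‖ ≤ ∑ i : Fin N,
              ‖iteratedFDeriv ℝ 2 u x ![EuclideanSpace.single i 1, EuclideanSpace.single i 1]‖ := by
              unfold lap; exact norm_sum_le _ _
          _ ≤ ∑ _i : Fin N, ‖iteratedFDeriv ℝ 2 u x‖ := Finset.sum_le_sum fun i _ => hone i
          _ = (N : ℝ) * ‖iteratedFDeriv ℝ 2 u x‖ := by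
              rw [Finset.sum_const, Finset.card_univ, Fintype.card_fin, nsmul_eq_mul]
          _ = ((N:ℝ≥0) : ℝ) * ‖iteratedFDeriv ℝ 2 u x‖ := by push_cast; ring
    refine hstep.trans ?_
    have : ((N : ℝ≥0) : ℝ≥0∞) = (N : ℝ≥0∞) := by push_cast; ring
    rw [this]
    gcongr
    exact S19.h2_bound₂ hQo hQb hsu
  -- main chain in ℝ≥0∞
  have hmain : eLpNorm (fun x => fCH φ₁ x - fCH φ₂ x) 2 ν ≤ 𝒞 * S * H := by
    have he : (fun x => fCH φ₁ x - fCH φ₂ x) = (fun x => -(lap u x)) + (fun x => u x * g x) :=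
      funext fun x => hpoint x
    have hneg : eLpNorm (fun x => -(lap u x)) 2 ν = eLpNorm (lap u) 2 ν :=
      eLpNorm_neg _ _ _
    have hholder : eLpNorm (fun x => u x * g x) 2 ν ≤ eLpNorm u 6 ν * eLpNorm g 3 ν := by
      have h := eLpNorm_smul_le_mul_eLpNorm (𝕜 := ℝ) (E := ℝ) (μ := ν) (p := 6) (q := 3) (r := 2)
        (f := g) (φ := u) (hcg.aestronglyMeasurable.restrict) (hcu.aestronglyMeasurable.restrict)
        (hpqr := ⟨by rw [← one_div, ← one_div, ← one_div, show (1:ℝ≥0∞)/2 = 1/6+1/3 by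
              rw [show (1:ℝ≥0∞)/3 = 2/6 by rw [ENNReal.div_eq_div_iff] <;> norm_num,
                ENNReal.div_add_div_same, ENNReal.div_eq_div_iff] <;> norm_num]⟩)
      simpa [Pi.smul_apply, smul_eq_mul, Pi.mul_def] using h
    calc eLpNorm (fun x => fCH φ₁ x - fCH φ₂ x) 2 ν
        ≤ eLpNorm (fun x => -(lap u x)) 2 ν + eLpNorm (fun x => u x * g x) 2 ν := by
          rw [he]
          exact eLpNorm_add_le ((hclap.neg).aestronglyMeasurable.restrict)
            ((hcu.mul hcg).aestronglyMeasurable.restrict) one_le_two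
      _ ≤ (N : ℝ≥0∞) * H + (K * H) * ((21 * W ^ 2 + E₃) * S) := by
          rw [hneg]
          exact add_le_add hlapb (hholder.trans (mul_le_mul' hub hgb))
      _ ≤ (N : ℝ≥0∞) * (S * H) + K * (21 * W ^ 2 + E₃) * (S * H) :=
          add_le_add (mul_le_mul_right (le_mul_of_one_le_left zero_le hS1) _)
            (le_of_eq (by ring))
      _ = 𝒞 * S * H := by rw [h𝒞]; ring
  -- convert to real numbers
  have hlp : lpQ Q 2 (fun x => fCH φ₁ x - fCH φ₂ x) =
      (eLpNorm (fun x => fCH φ₁ x - fCH φ₂ x) 2 ν).toReal := by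
    have hcv : Continuous (fun x => fCH φ₁ x - fCH φ₂ x) := by
      have : (fun x => fCH φ₁ x - fCH φ₂ x) = (fun x => -(lap u x)) + (fun x => u x * g x) :=
        funext fun x => hpoint x
      rw [this]
      exact (hclap.neg).add (hcu.mul hcg)
    unfold lpQ
    rw [show (∫ x in Q, ‖fCH φ₁ x - fCH φ₂ x‖ ^ (2:ℝ)) =
        ∫ x in Q, ‖fCH φ₁ x - fCH φ₂ x‖ ^ (2:ℕ) by
      refine integral_congr_ae (Eventually.of_forall fun x => ?_)
      show ‖fCH φ₁ x - fCH φ₂ x‖ ^ (2:ℝ) = ‖fCH φ₁ x - fCH φ₂ x‖ ^ (2:ℕ)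
      rw [show ((2:ℝ)) = ((2:ℕ):ℝ) by norm_num, Real.rpow_natCast]]
    rw [S19.sq_integral_eq hcv, ENNReal.toReal_rpow, S19.eLpNorm_two_eq]
  have hRfin : 𝒞 * S * H ≠ ⊤ :=
    ENNReal.mul_ne_top (ENNReal.mul_ne_top h𝒞fin ENNReal.ofReal_ne_top) ENNReal.ofReal_ne_top
  have hreal : lpQ Q 2 (fun x => fCH φ₁ x - fCH φ₂ x) ≤ (𝒞 * S * H).toReal := by
    rw [hlp]
    exact ENNReal.toReal_mono hRfin hmain
  have hfinal : (𝒞 * S * H).toReal =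
      𝒞.toReal * (1 + h1Q Q φ₁ ^ 2 + h1Q Q φ₂ ^ 2) * h2Q Q u := by
    rw [ENNReal.toReal_mul, ENNReal.toReal_mul, hS, hH,
      ENNReal.toReal_ofReal (by positivity), ENNReal.toReal_ofReal h2nn]
  refine hreal.trans ?_
  rw [hfinal]
  have h𝒞nn : 0 ≤ 𝒞.toReal := ENNReal.toReal_nonneg
  have hX : (0:ℝ) ≤ 1 + h1Q Q φ₁ ^ 2 + h1Q Q φ₂ ^ 2 := by positivity
  exact mul_le_mul_of_nonneg_right (mul_le_mul_of_nonneg_right (by linarith) hX) h2nn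
end
end
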